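/- Let L be a Lie algebra over a field F of characteristic 0 graded by an arbitrary group G, and let (V, ψ) be a finite dimensional graded L-module that is completely reducible as an L-module (disregarding the grading). Then V = V₁ ⊕ V₂ ⊕ … ⊕ V_s for some irreducible graded L-submodules Vᵢ. -/

import Mathlib

noncomputable section

attribute [local instance] LieRing.ofAssociativeRing

/-- A `G`-grading on a Lie algebra `L`: a decomposition `L = ⊕_{g ∈ G} L^{(g)}` into subspaces
with `⁅L^{(g)}, L^{(h)}⁆ ⊆ L^{(gh)}`. -/
structure LieGrading (F G L : Type*) [Field F] [Group G] [LieRing L] [LieAlgebra F L] where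
  piece : G → Submodule F L
  indep : iSupIndep piece
  total : (⨆ g : G, piece g) = ⊤
  bracket_mem : ∀ (g h : G) (x y : L), x ∈ piece g → y ∈ piece h → ⁅x, y⁆ ∈ piece (g * h)

/-- A subspace `W` is graded if `W = ⊕_{g ∈ G} (W ∩ L^{(g)})`. -/
def LieGrading.IsGraded {F G L : Type*} [Field F] [Group G] [LieRing L] [LieAlgebra F L]
    (𝒢 : LieGrading F G L) (W : Submodule F L) : Prop :=
  (⨆ g : G, W ⊓ 𝒢.piece g) = W

/-- A `G`-graded module `(V, ψ)` over a `G`-graded Lie algebra `L`: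
`ψ(L^{(g)}) V^{(h)} ⊆ V^{(gh)}`. -/
structure GradedLieModule (F G L V : Type*) [Field F] [Group G]
    [LieRing L] [LieAlgebra F L] [AddCommGroup V] [Module F V]
    (𝒢 : LieGrading F G L) where
  ψ : L →ₗ⁅F⁆ Module.End F V
  piece : G → Submodule F V
  indep : iSupIndep piece
  total : (⨆ g : G, piece g) = ⊤
  smul_mem : ∀ (g h : G) (a : L) (v : V),
    a ∈ 𝒢.piece g → v ∈ piece h → ψ a v ∈ piece (g * h)

section

variable {F G L V : Type*} [Field F] [Group G]
    [LieRing L] [LieAlgebra F L] [AddCommGroup V] [Module F V]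
    {𝒢 : LieGrading F G L}

/-- A subspace stable under the `L`-action. -/
def GradedLieModule.IsLSubmodule (M : GradedLieModule F G L V 𝒢) (W : Submodule F V) : Prop :=
  ∀ (a : L), ∀ v ∈ W, M.ψ a v ∈ W

/-- A graded `L`-submodule: an `L`-submodule `W` with `W = ⊕_{g ∈ G} (W ∩ V^{(g)})`. -/
def GradedLieModule.IsGradedLSubmodule (M : GradedLieModule F G L V 𝒢)
    (W : Submodule F V) : Prop :=
  M.IsLSubmodule W ∧ (⨆ g : G, W ⊓ M.piece g) = W

/-- A nonzero graded `L`-submodule `W` is irreducible if it contains no nontrivial graded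
`L`-submodules. -/
def GradedLieModule.IsIrreducible (M : GradedLieModule F G L V 𝒢)
    (W : Submodule F V) : Prop :=
  W ≠ ⊥ ∧ ∀ U : Submodule F V, U ≤ W → M.IsGradedLSubmodule U → U = ⊥ ∨ U = W

/-- `V` is completely reducible as an `L`-module (disregarding the grading). -/
def GradedLieModule.IsCompletelyReducible (M : GradedLieModule F G L V 𝒢) : Prop :=
  ∀ W : Submodule F V, M.IsLSubmodule W →
    ∃ W' : Submodule F V, M.IsLSubmodule W' ∧ IsCompl W W'

end

/-!
Graded `L`-submodules of `V` are exactly the subspaces stable under `ψ(L)` and under the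
projections `proj g` onto the graded pieces, i.e. the submodules of `V` over the subalgebra of
`End V` generated by these operators. It therefore suffices to show that `V` is a semisimple
module over that algebra, since a finite-dimensional semisimple module is a finite direct sum of
simple submodules.

Let `W` be a graded `L`-submodule. Complete reducibility gives an `L`-stable complement, hence a
projection `π` onto `W` commuting with `ψ(L)`. Its degree-`1` part `∑_g proj g ∘ π ∘ proj g` is
still a projection onto `W`, commutes with every `proj g`, and still commutes with `ψ a` because
`ψ a ∘ proj h = proj (k * h) ∘ ψ a` for `a ∈ L^{(k)}`. Its kernel is a graded `L`-stable
complement of `W`.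
-/

theorem Submodule.iSupIndep_restrictScalars_iff (S : Type*) {R M ι : Type*} [Semiring R]
    [Semiring S] [AddCommMonoid M] [Module R M] [Module S M] [SMul S R] [IsScalarTower S R M]
    {t : ι → Submodule R M} : iSupIndep (fun i ↦ (t i).restrictScalars S) ↔ iSupIndep t := by
  simp only [iSupIndep_def, ← restrictScalars_iSup, disjoint_restrictScalars_iff]

theorem IsSemisimpleModule.exists_fin_iSupIndep_isAtom (R M : Type*) [Ring R] [AddCommGroup M]
    [Module R M] [IsSemisimpleModule R M] [Module.Finite R M] :
    ∃ (n : ℕ) (S : Fin n → Submodule R M), iSupIndep S ∧ ⨆ i, S i = ⊤ ∧ ∀ i, IsAtom (S i) := by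
  obtain ⟨s, hind, htop, hsimple⟩ := exists_sSupIndep_sSup_simples_eq_top R M
  simp only [isSimpleModule_iff_isAtom] at hsimple
  rw [sSupIndep_iff] at hind
  have : Finite s := WellFoundedGT.finite_of_iSupIndep hind fun m ↦ (hsimple m m.2).1
  let e := Finite.equivFin s
  refine ⟨Nat.card s, fun i ↦ e.symm i, hind.comp e.symm.injective, ?_,
    fun i ↦ hsimple _ (e.symm i).2⟩
  rw [← htop, sSup_eq_iSup', ← e.symm.iSup_comp]

open DirectSum

namespace GradedLieModule

variable {F G L V : Type*} [Field F] [Group G] [LieRing L] [LieAlgebra F L]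
  [AddCommGroup V] [Module F V] {𝒢 : LieGrading F G L} (M : GradedLieModule F G L V 𝒢)

section Decomposition

variable [DecidableEq G]

theorem isInternal : IsInternal M.piece :=
  (isInternal_submodule_iff_iSupIndep_and_iSup_eq_top _).mpr ⟨M.indep, M.total⟩

instance : Decomposition M.piece := M.isInternal.chooseDecomposition

def proj (g : G) : Module.End F V :=
  (M.piece g).subtype ∘ₗ component F G (fun g ↦ M.piece g) g ∘ₗ
    (decomposeLinearEquiv M.piece).toLinearMap

theorem proj_mem (g : G) (v : V) : M.proj g v ∈ M.piece g := (decompose M.piece v g).2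

variable {M} in
theorem proj_apply_of_mem {g : G} {v : V} (hv : v ∈ M.piece g) (h : G) :
    M.proj h v = if g = h then v else 0 := by
  split_ifs with hgh
  · exact hgh ▸ decompose_of_mem_same M.piece hv
  · exact decompose_of_mem_ne M.piece hv hgh

theorem ψ_comp_proj {k : G} {a : L} (ha : a ∈ 𝒢.piece k) (h : G) :
    M.ψ a * M.proj h = M.proj (k * h) * M.ψ a := by
  refine decompose_lhom_ext M.piece fun g ↦ LinearMap.ext fun ⟨v, hv⟩ ↦ ?_
  by_cases hgh : g = h <;>
    simp [proj_apply_of_mem hv, proj_apply_of_mem (M.smul_mem k g a v ha hv), hgh]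

theorem isGraded_iff_forall_proj_mem {W : Submodule F V} :
    (⨆ g, W ⊓ M.piece g) = W ↔ ∀ g, ∀ v ∈ W, M.proj g v ∈ W := by
  classical
  refine ⟨fun hW g v hv ↦ ?_, fun h ↦ le_antisymm (iSup_le fun _ ↦ inf_le_left) fun v hv ↦ ?_⟩
  · rw [← hW] at hv
    induction hv using Submodule.iSup_induction' with
    | mem k x hx =>
      rw [proj_apply_of_mem hx.2]
      split_ifs
      exacts [hx.1, W.zero_mem]
    | zero => simp
    | add x y _ _ hx hy => simpa using W.add_mem hx hy
  · rw [← sum_support_decompose M.piece v]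
    exact Submodule.sum_mem _ fun g _ ↦ Submodule.mem_iSup_of_mem g ⟨h g v hv, M.proj_mem g v⟩

/-- The degree-`1` component `∑_g proj g ∘ f ∘ proj g` of `f` in the induced grading of `End V`. -/
def diagonalPart (f : Module.End F V) : Module.End F V :=
  toModule F G V (fun g ↦ M.proj g ∘ₗ f ∘ₗ (M.piece g).subtype) ∘ₗ
    (decomposeLinearEquiv M.piece).toLinearMap

variable {M} in
theorem diagonalPart_apply_of_mem (f : Module.End F V) {g : G} {v : V} (hv : v ∈ M.piece g) :
    M.diagonalPart f v = M.proj g (f v) := by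
  rw [diagonalPart, LinearMap.comp_apply, LinearEquiv.coe_coe, decomposeLinearEquiv_apply,
    decompose_of_mem M.piece hv]
  exact toModule_lof F (M := fun g ↦ M.piece g) g ⟨v, hv⟩

theorem commute_proj_diagonalPart (f : Module.End F V) (h : G) :
    Commute (M.proj h) (M.diagonalPart f) := by
  refine decompose_lhom_ext M.piece fun g ↦ LinearMap.ext fun ⟨v, hv⟩ ↦ ?_
  rcases eq_or_ne g h with rfl | hgh <;>
    simp [diagonalPart_apply_of_mem f hv, proj_apply_of_mem hv,
      proj_apply_of_mem (M.proj_mem g _), *]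

theorem commute_diagonalPart_ψ {f : Module.End F V} (hf : ∀ a, Commute f (M.ψ a)) (a : L) :
    Commute (M.diagonalPart f) (M.ψ a) := by
  have ha : a ∈ ⨆ k, 𝒢.piece k := 𝒢.total ▸ Submodule.mem_top
  induction ha using Submodule.iSup_induction' with
  | mem k a ha =>
    refine decompose_lhom_ext M.piece fun g ↦ LinearMap.ext fun ⟨v, hv⟩ ↦ ?_
    have hfa : f (M.ψ a v) = M.ψ a (f v) := congr($((hf a).eq) v)
    have hψ : M.ψ a (M.proj g (f v)) = M.proj (k * g) (M.ψ a (f v)) :=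
      congr($(M.ψ_comp_proj ha g) (f v))
    simp [diagonalPart_apply_of_mem f hv, diagonalPart_apply_of_mem f (M.smul_mem k g a v ha hv),
      hfa, hψ]
  | zero => simp
  | add x y _ _ hx hy => rw [map_add]; exact hx.add_right hy

variable {M}

theorem diagonalPart_apply_mem {W : Submodule F V} (hW : (⨆ g, W ⊓ M.piece g) = W)
    {f : Module.End F V} (hf : ∀ v, f v ∈ W) (v : V) : M.diagonalPart f v ∈ W := by
  induction v using Decomposition.inductionOn M.piece with
  | zero => simp
  | homogeneous v =>
    rw [diagonalPart_apply_of_mem f v.2]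
    exact M.isGraded_iff_forall_proj_mem.mp hW _ _ (hf _)
  | add x y hx hy => rw [map_add]; exact W.add_mem hx hy

theorem diagonalPart_apply_eq_self {W : Submodule F V} (hW : (⨆ g, W ⊓ M.piece g) = W)
    {f : Module.End F V} (hf : ∀ v ∈ W, f v = v) {v : V} (hv : v ∈ W) :
    M.diagonalPart f v = v := by
  rw [← hW] at hv
  induction hv using Submodule.iSup_induction' with
  | mem g v hv =>
    rw [diagonalPart_apply_of_mem f hv.2, hf v hv.1, proj_apply_of_mem hv.2, if_pos rfl]
  | zero => simp
  | add x y _ _ hx hy => rw [map_add, hx, hy]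

variable (M)

theorem exists_isGradedLSubmodule_isCompl (hcr : M.IsCompletelyReducible) {W : Submodule F V}
    (hW : M.IsGradedLSubmodule W) : ∃ K, M.IsGradedLSubmodule K ∧ IsCompl W K := by
  obtain ⟨W', hW', hc⟩ := hcr W hW.1
  have hπ (a : L) : Commute (W.projection W' hc) (M.ψ a) :=
    (LinearMap.IsIdempotentElem.commute_iff (W.isIdempotentElem_projection hc)).mpr
      ⟨by rw [W.range_projection hc]; exact fun v hv ↦ hW.1 a v hv,
        by rw [W.ker_projection hc]; exact fun v hv ↦ hW' a v hv⟩
  set P := M.diagonalPart (W.projection W' hc)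
  have hP_mem : ∀ v, P v ∈ W := diagonalPart_apply_mem hW.2 (W.projection_apply_mem hc)
  have hP_id : ∀ v ∈ W, P v = v :=
    fun v ↦ diagonalPart_apply_eq_self hW.2 fun v hv ↦ W.projection_apply_of_mem_left hc hv
  have hker {T : Module.End F V} (hT : Commute P T) {v : V} (hv : v ∈ LinearMap.ker P) :
      T v ∈ LinearMap.ker P := by
    rw [LinearMap.mem_ker] at hv ⊢
    rw [← Module.End.mul_apply, hT.eq, Module.End.mul_apply, hv, map_zero]
  refine ⟨LinearMap.ker P, ⟨fun a _ hv ↦ hker (M.commute_diagonalPart_ψ hπ a) hv,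
    M.isGraded_iff_forall_proj_mem.mpr fun g _ hv ↦ hker (M.commute_proj_diagonalPart _ g).symm hv⟩,
    ?_⟩
  simpa using LinearMap.isCompl_of_proj (f := P.codRestrict W hP_mem) fun x ↦
    Subtype.ext (hP_id x x.2)

def operatorAlgebra : Subalgebra F (Module.End F V) :=
  Algebra.adjoin F (Set.range M.ψ ∪ Set.range M.proj)

theorem isGradedLSubmodule_restrictScalars (N : Submodule M.operatorAlgebra V) :
    M.IsGradedLSubmodule (N.restrictScalars F) :=
  ⟨fun a _ hv ↦ N.smul_mem ⟨M.ψ a, Algebra.subset_adjoin (.inl ⟨a, rfl⟩)⟩ hv,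
    M.isGraded_iff_forall_proj_mem.mpr fun g _ hv ↦
      N.smul_mem ⟨M.proj g, Algebra.subset_adjoin (.inr ⟨g, rfl⟩)⟩ hv⟩

theorem exists_restrictScalars_eq {W : Submodule F V} (hW : M.IsGradedLSubmodule W) :
    ∃ N : Submodule M.operatorAlgebra V, N.restrictScalars F = W := by
  refine ⟨{ W with smul_mem' := fun ⟨x, hx⟩ v hv ↦ ?_ }, rfl⟩
  induction hx using Algebra.adjoin_induction generalizing v with
  | mem x hx =>
    rcases hx with ⟨a, rfl⟩ | ⟨g, rfl⟩
    exacts [hW.1 a v hv, M.isGraded_iff_forall_proj_mem.mp hW.2 g v hv]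
  | algebraMap r => exact W.smul_mem r hv
  | add x y _ _ hx hy => exact W.add_mem (hx v hv) (hy v hv)
  | mul x y _ _ hx hy => exact hx _ (hy v hv)

theorem isSemisimpleModule_operatorAlgebra (hcr : M.IsCompletelyReducible) :
    IsSemisimpleModule M.operatorAlgebra V where
  exists_isCompl N := by
    obtain ⟨K, hK, hNK⟩ :=
      M.exists_isGradedLSubmodule_isCompl hcr (M.isGradedLSubmodule_restrictScalars N)
    obtain ⟨K, rfl⟩ := M.exists_restrictScalars_eq hK
    exact ⟨K, (Submodule.isCompl_restrictScalars_iff F).mp hNK⟩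

theorem isIrreducible_restrictScalars {N : Submodule M.operatorAlgebra V} (hN : IsAtom N) :
    M.IsIrreducible (N.restrictScalars F) := by
  refine ⟨(Submodule.restrictScalars_eq_bot_iff F _ V).not.mpr hN.1, fun U hUN hU ↦ ?_⟩
  obtain ⟨U, rfl⟩ := M.exists_restrictScalars_eq hU
  simpa using hN.le_iff.mp ((Submodule.restrictScalars_le F).mp hUN)

end Decomposition

end GradedLieModule

theorem graded_module_decomposes_into_irreducibles_general
    (F G L V : Type*) [Field F] [Group G]
    [LieRing L] [LieAlgebra F L] [AddCommGroup V] [Module F V] [FiniteDimensional F V]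
    (𝒢 : LieGrading F G L) (M : GradedLieModule F G L V 𝒢)
    (hcr : M.IsCompletelyReducible) :
    ∃ (s : ℕ) (Vfam : Fin s → Submodule F V),
      iSupIndep Vfam ∧ (⨆ i, Vfam i) = ⊤ ∧
      ∀ i, M.IsGradedLSubmodule (Vfam i) ∧ M.IsIrreducible (Vfam i) := by
  classical
  have := M.isSemisimpleModule_operatorAlgebra hcr
  have : Module.Finite M.operatorAlgebra V := .of_restrictScalars_finite F _ V
  obtain ⟨s, S, hind, htop, hatom⟩ :=
    IsSemisimpleModule.exists_fin_iSupIndep_isAtom M.operatorAlgebra V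
  refine ⟨s, fun i ↦ (S i).restrictScalars F, (Submodule.iSupIndep_restrictScalars_iff F).mpr hind,
    ?_, fun i ↦ ⟨M.isGradedLSubmodule_restrictScalars _, M.isIrreducible_restrictScalars (hatom i)⟩⟩
  rw [← Submodule.restrictScalars_iSup, htop, Submodule.restrictScalars_top]

/-- a finite dimensional graded module `(V,ψ)` over a Lie algebra `L`
(char `0`) graded by an arbitrary group `G`, completely reducible as an `L`-module, is a
direct sum of irreducible graded `L`-submodules. -/
theorem graded_module_decomposes_into_irreducibles
    (F G L V : Type*) [Field F] [CharZero F] [Group G]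
    [LieRing L] [LieAlgebra F L] [AddCommGroup V] [Module F V] [FiniteDimensional F V]
    (𝒢 : LieGrading F G L) (M : GradedLieModule F G L V 𝒢)
    (hcr : M.IsCompletelyReducible) :
    ∃ (s : ℕ) (Vfam : Fin s → Submodule F V),
      iSupIndep Vfam ∧ (⨆ i, Vfam i) = ⊤ ∧
      ∀ i, M.IsGradedLSubmodule (Vfam i) ∧ M.IsIrreducible (Vfam i) :=
  graded_module_decomposes_into_irreducibles_general F G L V 𝒢 M hcr
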